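/- Metastability cannot be resolved: there exists no circuit that implements the function f : BM → Pow(BM) with f(M) = {0, 1} and f(x) = {x} for x ∈ {0, 1}. -/

import Mathlib

set_option linter.unusedVariables false

attribute [local instance] Classical.propDecidable

/-- Signal values: stable `zero`, `one`, and metastable `meta`. -/
inductive BM : Type
  | zero
  | one
  | metastable
  deriving DecidableEq

/-- Embedding of stable Boolean values into `BM`. -/
def BM.ofBool : Bool → BM
  | false => BM.zero
  | true => BM.one

/-- `inResM x y` means `y ∈ ResM(x)`, the set of partial resolutions of `x`. -/
def inResM {k : ℕ} (x y : Fin k → BM) : Prop :=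
  ∀ i, x i = y i ∨ x i = BM.metastable

/-- `inRes x y` means `y ∈ Res(x)`, i.e. `y` is a complete (stable) resolution of `x`. -/
def inRes {k : ℕ} (x y : Fin k → BM) : Prop :=
  inResM x y ∧ ∀ i, y i ≠ BM.metastable

/-- The complete resolutions of `x`, viewed as Boolean words. -/
def boolRes {k : ℕ} (x : Fin k → BM) : Set (Fin k → Bool) :=
  { z | ∀ i, x i = BM.ofBool (z i) ∨ x i = BM.metastable }

/-- The metastable (Kleene) extension `f_M : BM^k → BM` of a Boolean function
`f : B^k → B`: it outputs a stable value `b` iff all complete resolutions of the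
input evaluate to `b` under `f`, and `meta` otherwise. -/
noncomputable def kleene {k : ℕ} (f : (Fin k → Bool) → Bool) (x : Fin k → BM) : BM :=
  if ∀ z ∈ boolRes x, f z = false then BM.zero
  else if ∀ z ∈ boolRes x, f z = true then BM.one
  else BM.metastable

/-- Combinational logic with `m` input nodes: formulas built from inputs,
`BM`-constants (gates of indegree 0), and gates computing the metastable extension
of a Boolean function of their in-neighbors.  (A DAG evaluates exactly like the
formula obtained by unsharing, so this faithfully captures evaluation of
combinational logic DAGs.) -/
inductive Comb (m : ℕ) : Type
  | input : Fin m → Comb m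
  | const : BM → Comb m
  | gate : (j : ℕ) → ((Fin j → Bool) → Bool) → (Fin j → Comb m) → Comb m

/-- Recursive evaluation of combinational logic on input `x ∈ BM^m`. -/
noncomputable def Comb.eval {m : ℕ} (x : Fin m → BM) : Comb m → BM
  | .input i => x i
  | .const b => b
  | .gate _ f cs => kleene f (fun t => (cs t).eval x)

/-- Register types: simple, mask-0, mask-1. -/
inductive RegType : Type
  | simple
  | mask0
  | mask1
  deriving DecidableEq

/-- `regRead t b (o, b')` holds iff a register of type `t` in state `b` can be read
with read value `o`, moving to state `b'`:  a register in a stable state yields that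
state and keeps it; a simple register in state `meta` yields `meta` and stays `meta`;
a mask-`c` register in state `meta` either yields `c` staying in state `meta`, or
yields `meta` changing its state to `1 - c`. -/
def regRead : RegType → BM → BM × BM → Prop
  | _, BM.zero, p => p = (BM.zero, BM.zero)
  | _, BM.one, p => p = (BM.one, BM.one)
  | RegType.simple, BM.metastable, p => p = (BM.metastable, BM.metastable)
  | RegType.mask0, BM.metastable, p => p = (BM.zero, BM.metastable) ∨ p = (BM.metastable, BM.one)
  | RegType.mask1, BM.metastable, p => p = (BM.one, BM.metastable) ∨ p = (BM.metastable, BM.zero)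

/-- A circuit with `m` input, `k` local and `n` output registers: a type for each
register, combinational logic with `m + k` input nodes (one per non-output register)
and `k + n` output nodes (one per non-input register), and an initialization of the
non-input registers. -/
structure Circuit (m k n : ℕ) : Type where
  inType : Fin m → RegType
  locType : Fin k → RegType
  outType : Fin n → RegType
  logic : Fin (k + n) → Comb (m + k)
  init : Fin (k + n) → BM

/-- A state of a circuit: values of input, local, and output registers. -/
structure CState (m k n : ℕ) : Type where
  inp : Fin m → BM
  loc : Fin k → BM
  out : Fin n → BM

/-- A state as a word in `BM^{m+k+n}`. -/
def CState.toVec {m k n : ℕ} (s : CState m k n) : Fin (m + (k + n)) → BM :=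
  Fin.append s.inp (Fin.append s.loc s.out)

/-- Read phase: `o ∈ BM^{m+k}` are possible read values of the non-output registers
in state `s`, and `ι'` the corresponding successor states of the input registers. -/
def ReadRel {m k n : ℕ} (C : Circuit m k n) (s : CState m k n)
    (o : Fin (m + k) → BM) (ι' : Fin m → BM) : Prop :=
  (∀ i : Fin m, regRead (C.inType i) (s.inp i) (o (Fin.castAdd k i), ι' i)) ∧
  (∀ j : Fin k, ∃ st', regRead (C.locType j) (s.loc j) (o (Fin.natAdd m j), st'))

/-- Evaluation phase: `f^G` applied to the read values. -/
noncomputable def evalLogic {m k n : ℕ} (C : Circuit m k n) (o : Fin (m + k) → BM) :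
    Fin (k + n) → BM :=
  fun j => (C.logic j).eval o

/-- `Write^C(s)`: possible values written to the non-input registers. -/
def WriteSet {m k n : ℕ} (C : Circuit m k n) (s : CState m k n) :
    Set (Fin (k + n) → BM) :=
  { w | ∃ o ι', ReadRel C s o ι' ∧ inResM (evalLogic C o) w }

/-- Successor-state relation: read all non-output registers, evaluate the logic,
and write an arbitrary partial resolution of the result to the non-input registers. -/
def Succ {m k n : ℕ} (C : Circuit m k n) (s s' : CState m k n) : Prop :=
  ∃ o ι', ReadRel C s o ι' ∧ s'.inp = ι' ∧
    inResM (evalLogic C o) (Fin.append s'.loc s'.out)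

/-- `reach C r s₀ = S^C_r(s₀)`: states reachable in `r` rounds from `s₀`. -/
def reach {m k n : ℕ} (C : Circuit m k n) : ℕ → CState m k n → Set (CState m k n)
  | 0, s => {s}
  | r + 1, s => { t | ∃ u ∈ reach C r s, Succ C u t }

/-- The initial state of `C` with input `ι`. -/
def initState {m k n : ℕ} (C : Circuit m k n) (ι : Fin m → BM) : CState m k n :=
  ⟨ι, fun j => C.init (Fin.castAdd n j), fun j => C.init (Fin.natAdd k j)⟩

/-- `C_r(ι)`: possible outputs after `r` rounds on input `ι`. -/
def Cout {m k n : ℕ} (C : Circuit m k n) (r : ℕ) (ι : Fin m → BM) :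
    Set (Fin n → BM) :=
  { y | ∃ s ∈ reach C r (initState C ι), y = s.out }

/-- `r` rounds of `C` implement `f` iff `C_r(ι) ⊆ f(ι)` for all inputs `ι`. -/
def Implements {m k n : ℕ} (C : Circuit m k n) (r : ℕ)
    (f : (Fin m → BM) → Set (Fin n → BM)) : Prop :=
  ∀ ι, Cout C r ι ⊆ f ι

/-- All registers of the circuit are simple. -/
def OnlySimple {m k n : ℕ} (C : Circuit m k n) : Prop :=
  (∀ i, C.inType i = RegType.simple) ∧ (∀ j, C.locType j = RegType.simple) ∧
    (∀ j, C.outType j = RegType.simple)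

/-- `Fun_S^r`: functions implementable by `r` rounds of circuits with only simple
registers. -/
def FunS (r m n : ℕ) : Set ((Fin m → BM) → Set (Fin n → BM)) :=
  { f | ∃ k, ∃ C : Circuit m k n, OnlySimple C ∧ Implements C r f }

/-- `Fun_M^r`: functions implementable by `r` rounds of circuits with arbitrary
register types. -/
def FunM (r m n : ℕ) : Set ((Fin m → BM) → Set (Fin n → BM)) :=
  { f | ∃ k, ∃ C : Circuit m k n, Implements C r f }

/-- A pivotal sequence over `BM^N`: consecutive elements differ in exactly one bit,
and that bit is `meta` in one of the two elements. -/
def PivotalSeq {N ℓ : ℕ} (x : Fin (ℓ + 1) → Fin N → BM) : Prop :=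
  ∀ i : Fin ℓ,
    ∃ j : Fin N,
      x i.castSucc j ≠ x i.succ j ∧
      (x i.castSucc j = BM.metastable ∨ x i.succ j = BM.metastable) ∧
      ∀ j' : Fin N, x i.castSucc j' ≠ x i.succ j' → j' = j

/-- A function `f : BM^m → Pow(BM^n)` is natural iff it is bit-wise and closed
(a product of component functions each taking values in `{{0}, {1}, BM}`)
and specific (stabilizing the input restricts the output). -/
def IsNatural {m n : ℕ} (f : (Fin m → BM) → Set (Fin n → BM)) : Prop :=
  (∃ g : Fin n → (Fin m → BM) → Set BM,
      (∀ i x, g i x = {BM.zero} ∨ g i x = {BM.one} ∨ g i x = (Set.univ : Set BM)) ∧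
      (∀ x, f x = { y | ∀ i, y i ∈ g i x })) ∧
  (∀ x y, inRes x y → f y ⊆ f x)

/-- The `i`-th component of the metastable closure of `f : B^m → B^n`. -/
noncomputable def mclosureC {m n : ℕ} (f : (Fin m → Bool) → Fin n → Bool)
    (x : Fin m → BM) (i : Fin n) : Set BM :=
  if ∀ z ∈ boolRes x, f z i = false then {BM.zero}
  else if ∀ z ∈ boolRes x, f z i = true then {BM.one}
  else Set.univ

/-- The metastable closure `[f]_M : BM^m → Pow(BM^n)` of `f : B^m → B^n`. -/
noncomputable def mclosure {m n : ℕ} (f : (Fin m → Bool) → Fin n → Bool)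
    (x : Fin m → BM) : Set (Fin n → BM) :=
  { y | ∀ i, y i ∈ mclosureC f x i }

/-- The metastability resolver specification: stable inputs are copied, a metastable
input may produce any stable output. -/
def resolveSpec : (Fin 1 → BM) → Set (Fin 1 → BM) := fun x =>
  if x 0 = BM.metastable then {fun _ => BM.zero, fun _ => BM.one} else {x}

/-!
Order `BM` by information, with `M` below `0` and `1`, and say that two states are linked within a
set `R` if a chain of pairwise comparable states of `R` joins them. Kleene evaluation is monotone,
and a less resolved state can mimic every read of a more resolved one (a mask register in state
`M` either reads the same stable value or is resolved to it), so comparable states have comparable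
successors; moreover all successors of one state are linked. Hence the initial states for the
inputs `0` and `1`, linked through the one for `M`, remain linked through every round. A circuit
implementing the resolver never outputs `M`, and along a chain of comparable states a stable
output cannot change, so the inputs `0` and `1` would produce the same output.
-/

namespace BM

instance : PartialOrder BM where
  le x y := x = y ∨ x = .metastable
  le_refl _ := Or.inl rfl
  le_trans := by
    rintro x y z (rfl | rfl) (rfl | rfl) <;> simp
  le_antisymm := by
    rintro x y (rfl | rfl) (h | rfl) <;> simp_all

theorem le_iff {x y : BM} : x ≤ y ↔ x = y ∨ x = .metastable := Iff.rfl

theorem metastable_le (x : BM) : .metastable ≤ x := Or.inr rfl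

theorem eq_of_le {x y : BM} (h : x ≤ y) (hx : x ≠ .metastable) : x = y :=
  h.resolve_right hx

theorem exists_eq_ofBool {x : BM} (hx : x ≠ .metastable) : ∃ b, x = ofBool b := by
  cases x
  exacts [⟨false, rfl⟩, ⟨true, rfl⟩, absurd rfl hx]

end BM

theorem inResM_iff_le {N : ℕ} {x y : Fin N → BM} : inResM x y ↔ x ≤ y := Iff.rfl

theorem boolRes_anti {N : ℕ} : Antitone (boolRes (k := N)) := by
  intro x y h z hz i
  rcases h i with h | h
  · rw [h]; exact hz i
  · exact Or.inr h

theorem boolRes_nonempty {N : ℕ} (x : Fin N → BM) : (boolRes x).Nonempty :=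
  ⟨fun i => match x i with | .one => true | _ => false, fun i => by
    cases hx : x i <;> simp [hx, BM.ofBool]⟩

theorem kleene_eq_ofBool_iff {N : ℕ} {f : (Fin N → Bool) → Bool} {x : Fin N → BM} {b : Bool} :
    kleene f x = BM.ofBool b ↔ ∀ z ∈ boolRes x, f z = b := by
  obtain ⟨z₀, hz₀⟩ := boolRes_nonempty x
  unfold kleene
  cases b <;> split_ifs <;>
    simp only [BM.ofBool, reduceCtorEq, true_iff, false_iff] <;> grind

theorem kleene_mono {N : ℕ} (f : (Fin N → Bool) → Bool) : Monotone (kleene f) := by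
  intro x y h
  by_cases hx : kleene f x = .metastable
  · rw [hx]; exact BM.metastable_le _
  obtain ⟨b, hb⟩ := BM.exists_eq_ofBool hx
  rw [hb, kleene_eq_ofBool_iff.2 fun z hz => kleene_eq_ofBool_iff.1 hb z (boolRes_anti h hz)]

theorem Comb.eval_mono {N : ℕ} : ∀ c : Comb N, Monotone fun x => c.eval x
  | .input i => fun _ _ h => h i
  | .const _ => fun _ _ _ => le_rfl
  | .gate _ f cs => fun _ _ h => kleene_mono f fun t => eval_mono (cs t) h

section Linked

variable {α : Type*} [Preorder α]

/-- `a` and `b` are joined by a chain of pairwise comparable elements of `R`; for circuit states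
this plays the role of the paper's pivotal sequences. -/
def Linked (R : Set α) : α → α → Prop :=
  Relation.ReflTransGen fun u v => u ∈ R ∧ v ∈ R ∧ (u ≤ v ∨ v ≤ u)

variable {R R' : Set α} {a b c : α}

theorem Linked.of_le (ha : a ∈ R) (hb : b ∈ R) (h : a ≤ b) : Linked R a b :=
  .single ⟨ha, hb, .inl h⟩

theorem Linked.of_ge (ha : a ∈ R) (hb : b ∈ R) (h : b ≤ a) : Linked R a b :=
  .single ⟨ha, hb, .inr h⟩

theorem Linked.trans (hab : Linked R a b) (hbc : Linked R b c) : Linked R a c :=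
  Relation.ReflTransGen.trans hab hbc

theorem Linked.symm (h : Linked R a b) : Linked R b a := by
  induction h with
  | refl => exact .refl
  | tail _ hcb ih => exact .head ⟨hcb.2.1, hcb.1, hcb.2.2.symm⟩ ih

theorem Linked.mono (hR : R ⊆ R') (h : Linked R a b) : Linked R' a b :=
  Relation.ReflTransGen.mono (fun _ _ e => ⟨hR e.1, hR e.2.1, e.2.2⟩) _ _ h

end Linked

def minRead : RegType → BM → BM × BM
  | _, .zero => (.zero, .zero)
  | _, .one => (.one, .one)
  | .simple, .metastable => (.metastable, .metastable)
  | .mask0, .metastable => (.metastable, .one)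
  | .mask1, .metastable => (.metastable, .zero)

theorem regRead_minRead (τ : RegType) (b : BM) : regRead τ b (minRead τ b) := by
  cases τ <;> cases b <;> simp [regRead, minRead]

theorem regRead.minRead_le {τ : RegType} {b : BM} {p : BM × BM} (h : regRead τ b p) :
    (minRead τ b).1 ≤ p.1 ∧ p.2 ≤ (minRead τ b).2 := by
  cases τ <;> cases b <;> simp only [regRead] at h <;> rcases h with rfl | rfl <;>
    simp [minRead, BM.le_iff]

theorem regRead.exists_le {τ : RegType} {a b : BM} {q : BM × BM} (h : regRead τ b q)
    (hab : a ≤ b) : ∃ p, regRead τ a p ∧ p ≤ q := by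
  rcases hab with rfl | rfl
  · exact ⟨q, h, le_rfl⟩
  cases b
  case metastable => exact ⟨q, h, le_rfl⟩
  all_goals cases τ <;> simp only [regRead] at h <;> subst h <;> simp [regRead, BM.le_iff]

namespace CState

variable {m k n : ℕ}

instance : Preorder (CState m k n) :=
  Preorder.lift fun s => (s.inp, s.loc, s.out)

theorem le_def {u v : CState m k n} : u ≤ v ↔ u.inp ≤ v.inp ∧ u.loc ≤ v.loc ∧ u.out ≤ v.out :=
  Iff.rfl

def ofWrite (ι : Fin m → BM) (w : Fin (k + n) → BM) : CState m k n :=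
  ⟨ι, fun j => w (Fin.castAdd n j), fun j => w (Fin.natAdd k j)⟩

theorem ofWrite_mono {ι ι' : Fin m → BM} {w w' : Fin (k + n) → BM} (hι : ι ≤ ι') (hw : w ≤ w') :
    ofWrite ι w ≤ (ofWrite ι' w' : CState m k n) :=
  ⟨hι, fun _ => hw _, fun _ => hw _⟩

end CState

namespace Circuit

variable {m k n : ℕ} (C : Circuit m k n)

theorem readRel_append {s : CState m k n} {pi : Fin m → BM × BM} {pl : Fin k → BM × BM}
    (hi : ∀ i, regRead (C.inType i) (s.inp i) (pi i))
    (hl : ∀ j, regRead (C.locType j) (s.loc j) (pl j)) :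
    ReadRel C s (Fin.append (fun i => (pi i).1) (fun j => (pl j).1)) fun i => (pi i).2 :=
  ⟨fun i => by simpa using hi i, fun j => ⟨(pl j).2, by simpa using hl j⟩⟩

theorem exists_readRel_min (s : CState m k n) : ∃ o₀ ι₀, ReadRel C s o₀ ι₀ ∧
    ∀ o ι', ReadRel C s o ι' → o₀ ≤ o ∧ ι' ≤ ι₀ := by
  refine ⟨_, _, C.readRel_append (fun i => regRead_minRead _ (s.inp i))
    (fun j => regRead_minRead _ (s.loc j)), fun o ι' h => ⟨?_, fun i => (h.1 i).minRead_le.2⟩⟩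
  refine (Fin.forall_fin_add _).2 ⟨fun i => by simpa using (h.1 i).minRead_le.1, fun j => ?_⟩
  obtain ⟨_, hj⟩ := h.2 j
  simpa using hj.minRead_le.1

theorem exists_readRel_le {u v : CState m k n} (huv : u ≤ v) {q : Fin (m + k) → BM}
    {ι' : Fin m → BM} (h : ReadRel C v q ι') :
    ∃ p ι'', ReadRel C u p ι'' ∧ p ≤ q ∧ ι'' ≤ ι' := by
  choose pi hpi using fun i => (h.1 i).exists_le (huv.1 i)
  choose st hst using h.2
  choose pl hpl using fun j => (hst j).exists_le (huv.2.1 j)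
  refine ⟨_, _, C.readRel_append (fun i => (hpi i).1) (fun j => (hpl j).1), ?_,
    fun i => (hpi i).2.2⟩
  exact (Fin.forall_fin_add _).2 ⟨fun i => by simpa using (hpi i).2.1,
    fun j => by simpa using (hpl j).2.1⟩

theorem evalLogic_mono : Monotone (evalLogic C) :=
  fun _ _ h j => (C.logic j).eval_mono h

theorem succ_iff {s t : CState m k n} : Succ C s t ↔
    ∃ o ι' w, ReadRel C s o ι' ∧ evalLogic C o ≤ w ∧ t = CState.ofWrite ι' w := by
  constructor
  · rintro ⟨o, ι', hr, rfl, hw⟩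
    exact ⟨o, _, _, hr, inResM_iff_le.1 hw, by cases t; simp [CState.ofWrite]⟩
  · rintro ⟨o, ι', w, hr, hw, rfl⟩
    exact ⟨o, ι', hr, rfl, by
      simp only [CState.ofWrite, Fin.append_castAdd_natAdd]; exact inResM_iff_le.2 hw⟩

theorem succ_ofWrite {s : CState m k n} {o : Fin (m + k) → BM} {ι' : Fin m → BM}
    {w : Fin (k + n) → BM} (hr : ReadRel C s o ι') (hw : evalLogic C o ≤ w) :
    Succ C s (CState.ofWrite ι' w) :=
  C.succ_iff.2 ⟨o, ι', w, hr, hw, rfl⟩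

theorem exists_succ (s : CState m k n) : ∃ t, Succ C s t :=
  let ⟨_, _, h, _⟩ := C.exists_readRel_min s
  ⟨_, C.succ_ofWrite h le_rfl⟩

theorem exists_succ_le {u v y : CState m k n} (huv : u ≤ v) (hy : Succ C v y) :
    ∃ x, Succ C u x ∧ x ≤ y := by
  obtain ⟨q, ι', w, hq, hw, rfl⟩ := C.succ_iff.1 hy
  obtain ⟨p, ι'', hp, hpq, hι⟩ := C.exists_readRel_le huv hq
  exact ⟨_, C.succ_ofWrite hp ((C.evalLogic_mono hpq).trans hw), CState.ofWrite_mono hι le_rfl⟩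

theorem linked_of_succ_of_succ {s x y : CState m k n} (hx : Succ C s x) (hy : Succ C s y) :
    Linked {t | Succ C s t} x y := by
  obtain ⟨o₀, ι₀, h₀, hmin⟩ := C.exists_readRel_min s
  suffices key : ∀ x, Succ C s x → Linked {t | Succ C s t} x (.ofWrite ι₀ (evalLogic C o₀)) from
    (key x hx).trans (key y hy).symm
  intro x hx
  obtain ⟨o, ι', w, hr, hw, rfl⟩ := C.succ_iff.1 hx
  obtain ⟨ho, hι⟩ := hmin o ι' hr
  have h₁ : .ofWrite ι' (evalLogic C o) ∈ {t | Succ C s t} := C.succ_ofWrite hr le_rfl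
  have h₂ : .ofWrite ι₀ (evalLogic C o) ∈ {t | Succ C s t} :=
    C.succ_ofWrite h₀ (C.evalLogic_mono ho)
  have h₃ : .ofWrite ι₀ (evalLogic C o₀) ∈ {t | Succ C s t} := C.succ_ofWrite h₀ le_rfl
  exact (Linked.of_ge (R := {t | Succ C s t}) hx h₁ (CState.ofWrite_mono le_rfl hw)).trans <|
    (Linked.of_le h₁ h₂ (CState.ofWrite_mono hι le_rfl)).trans <|
    Linked.of_ge h₂ h₃ (CState.ofWrite_mono le_rfl (C.evalLogic_mono ho))

theorem linked_succ_of_le {R : Set (CState m k n)} {u v x y : CState m k n} (hu : u ∈ R)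
    (hv : v ∈ R) (huv : u ≤ v) (hx : Succ C u x) (hy : Succ C v y) :
    Linked {t | ∃ s ∈ R, Succ C s t} x y := by
  obtain ⟨x', hx', hx'y⟩ := C.exists_succ_le huv hy
  have hsub : {t | Succ C u t} ⊆ {t | ∃ s ∈ R, Succ C s t} := fun t ht => ⟨u, hu, ht⟩
  exact ((C.linked_of_succ_of_succ hx hx').mono hsub).trans (.of_le ⟨u, hu, hx'⟩ ⟨v, hv, hy⟩ hx'y)

theorem initState_mono {ι ι' : Fin m → BM} (h : ι ≤ ι') : initState C ι ≤ initState C ι' :=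
  CState.le_def.2 ⟨h, le_rfl, le_rfl⟩

end Circuit

section

variable {m k n : ℕ} (C : Circuit m k n)

theorem Linked.succ {R : Set (CState m k n)} {a b x y : CState m k n} (hab : Linked R a b)
    (ha : a ∈ R) (hx : Succ C a x) (hy : Succ C b y) :
    Linked {t | ∃ s ∈ R, Succ C s t} x y := by
  induction hab generalizing y with
  | refl => exact (C.linked_of_succ_of_succ hx hy).mono fun t ht => ⟨a, ha, ht⟩
  | @tail c b _ hcb ih =>
    obtain ⟨hc, hb, hcomp⟩ := hcb
    obtain ⟨z, hz⟩ := C.exists_succ c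
    refine (ih hz).trans ?_
    rcases hcomp with hcb | hbc
    · exact C.linked_succ_of_le hc hb hcb hz hy
    · exact (C.linked_succ_of_le hb hc hbc hy hz).symm

theorem Linked.reach {S : Set (CState m k n)} {a b : CState m k n} (hab : Linked S a b)
    (ha : a ∈ S) (r : ℕ) :
    ∃ a' ∈ reach C r a, ∃ b' ∈ reach C r b, Linked (⋃ s ∈ S, reach C r s) a' b' := by
  induction r with
  | zero => exact ⟨a, rfl, b, rfl, hab.mono fun s hs => Set.mem_biUnion hs rfl⟩
  | succ r ih =>
    obtain ⟨a', ha', b', hb', h⟩ := ih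
    obtain ⟨x, hx⟩ := C.exists_succ a'
    obtain ⟨y, hy⟩ := C.exists_succ b'
    refine ⟨x, ⟨a', ha', hx⟩, y, ⟨b', hb', hy⟩, (h.succ C (Set.mem_biUnion ha ha') hx hy).mono ?_⟩
    rintro t ⟨u, hu, hut⟩
    obtain ⟨s, hs, hu⟩ := Set.mem_iUnion₂.1 hu
    exact Set.mem_biUnion hs ⟨u, hu, hut⟩

end

theorem Linked.out_eq {m k n : ℕ} {R : Set (CState m k n)} {a b : CState m k n}
    (h : Linked R a b) (hR : ∀ s ∈ R, ∀ j, s.out j ≠ .metastable) : a.out = b.out := by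
  induction h with
  | refl => rfl
  | tail _ hcb ih =>
    obtain ⟨hc, hb, hcb | hbc⟩ := hcb
    · exact ih.trans (funext fun j => BM.eq_of_le (hcb.2.2 j) (hR _ hc j))
    · exact ih.trans (funext fun j => BM.eq_of_le (hbc.2.2 j) (hR _ hb j)).symm

theorem resolveSpec_of_ne {x : Fin 1 → BM} (hx : x 0 ≠ .metastable) : resolveSpec x = {x} :=
  if_neg hx

theorem ne_metastable_of_mem_resolveSpec {x y : Fin 1 → BM} (hy : y ∈ resolveSpec x) (j : Fin 1) :
    y j ≠ .metastable := by
  obtain rfl := Subsingleton.elim j 0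
  unfold resolveSpec at hy
  split_ifs at hy with hx
  · rcases hy with rfl | rfl <;> nofun
  · rwa [hy]

/-- metastability cannot be resolved: no circuit implements
`f(M) = {0, 1}`, `f(x) = {x}` for `x ∈ {0,1}` (in any number `r ≥ 1` of rounds). -/
theorem no_metastability_resolver :
    ¬ ∃ (k r : ℕ) (C : Circuit 1 k 1), 0 < r ∧ Implements C r resolveSpec := by
  rintro ⟨k, r, C, -, hC⟩
  let init (b : BM) := initState C fun _ => b
  have hlink : Linked (Set.range (initState C)) (init .zero) (init .one) :=
    .trans (b := init .metastable)
      (.of_ge ⟨_, rfl⟩ ⟨_, rfl⟩ (C.initState_mono fun _ => BM.metastable_le _))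
      (.of_le ⟨_, rfl⟩ ⟨_, rfl⟩ (C.initState_mono fun _ => BM.metastable_le _))
  obtain ⟨a, ha, b, hb, hab⟩ := hlink.reach C ⟨_, rfl⟩ r
  have hR : ∀ s ∈ ⋃ t ∈ Set.range (initState C), reach C r t, ∀ j, s.out j ≠ .metastable := by
    simp only [Set.mem_iUnion, Set.mem_range, exists_prop]
    rintro s ⟨_, ⟨ι, rfl⟩, hs⟩
    exact ne_metastable_of_mem_resolveSpec (hC ι ⟨s, hs, rfl⟩)
  have ha0 := hC _ ⟨a, ha, rfl⟩
  have hb1 := hC _ ⟨b, hb, rfl⟩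
  rw [resolveSpec_of_ne BM.noConfusion, Set.mem_singleton_iff] at ha0 hb1
  have hout := hab.out_eq hR
  rw [ha0, hb1] at hout
  exact BM.noConfusion (congrFun hout 0)
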